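/- If the judgement n N1 ⋯ Nm : τ in context Γ is derivable in system SM_r (where n is a de Bruijn index and m ≥ 0), then there exist types σ1, …, σm and contexts Γ^1, …, Γ^m such that Γ = (ω^{n−1}.(σ1→⋯→σm→τ).nil) ∧ Γ^1 ∧ ⋯ ∧ Γ^m, for each 1 ≤ i ≤ m the judgement Ni : σi in Γ^i is derivable in SM_r, and τ = σ_{m+1}→⋯→σ_{m+k}→α for some k ≥ 0, types σ_{m+1}, …, σ_{m+k} and type variable α. -/
import Mathlib


set_option maxHeartbeats 1000000

namespace DBIT

/-- Terms of the λ_dB-calculus.  `var k` denotes the de Bruijn index `k+1`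
(de Bruijn indices are *positive* natural numbers). -/
inductive Tm : Type
  | var : ℕ → Tm
  | app : Tm → Tm → Tm
  | lam : Tm → Tm
deriving DecidableEq

/-- The set of free indices of a term. -/
def FI : Tm → Finset ℕ
  | .var k => {k + 1}
  | .app M N => FI M ∪ FI N
  | .lam M => ((FI M).filter (fun n => 1 < n)).image (fun n => n - 1)

/-- `supFI M` is the greatest free index of `M` (and `0` if `FI M = ∅`). -/
def supFI (M : Tm) : ℕ := (FI M).sup id

/-- Lift with cut-off: increment all indices that are free under `k` binders. -/
def liftRec (k : ℕ) : Tm → Tm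
  | .var n => if k ≤ n then .var (n + 1) else .var n
  | .app M N => .app (liftRec k M) (liftRec k N)
  | .lam M => .lam (liftRec (k + 1) M)

/-- The lift `M⁺` of `M`: increment all free indices by one. -/
def lift (M : Tm) : Tm := liftRec 0 M

/-- β-substitution: `subst k N M` is `{k+1 / N} M`. -/
def subst (k : ℕ) (N : Tm) : Tm → Tm
  | .app M1 M2 => .app (subst k N M1) (subst k N M2)
  | .lam M1 => .lam (subst (k + 1) (lift N) M1)
  | .var m => if k < m then .var (m - 1) else if m = k then N else .var m

/-- One-step β-reduction: the compatible closure of the β-contraction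
`(λ.M) N →β {1/N} M`. -/
inductive Beta : Tm → Tm → Prop
  | beta (M N : Tm) : Beta (.app (.lam M) N) (subst 0 N M)
  | appL {M M' : Tm} (N : Tm) : Beta M M' → Beta (.app M N) (.app M' N)
  | appR (M : Tm) {N N' : Tm} : Beta N N' → Beta (.app M N) (.app M N')
  | lam {M M' : Tm} : Beta M M' → Beta (.lam M) (.lam M')

/-- A term is a β-normal form when no β-reduction applies to it. -/
def IsNF (M : Tm) : Prop := ∀ N, ¬ Beta M N

/-- `appList h [N1, …, Nm] = (h N1 ⋯ Nm)`. -/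
def appList (h : Tm) (Ns : List Tm) : Tm := Ns.foldl .app h

/-! ### Restricted intersection types -/

mutual
  /-- The set `T` of restricted intersection types: `τ ::= α | u → τ`. -/
  inductive Ty : Type
    | tvar : ℕ → Ty
    | arr : IU → Ty → Ty
  /-- The set `U`: `u ::= ω | u ∧ u | τ`. -/
  inductive IU : Type
    | omega : IU
    | inter : IU → IU → IU
    | ofTy : Ty → IU
end

mutual
  /-- Equality of types in the quotient by commutativity/associativity of `∧`
  and neutrality of `ω`. -/
  inductive TyEq : Ty → Ty → Prop
    | refl (τ) : TyEq τ τ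
    | symm {τ σ} : TyEq τ σ → TyEq σ τ
    | trans {τ σ ρ} : TyEq τ σ → TyEq σ ρ → TyEq τ ρ
    | arr {u v τ σ} : UEq u v → TyEq τ σ → TyEq (.arr u τ) (.arr v σ)
  /-- Equality of `U`-elements in the quotient: `∧` is commutative, associative
  and has `ω` as neutral element. -/
  inductive UEq : IU → IU → Prop
    | refl (u) : UEq u u
    | symm {u v} : UEq u v → UEq v u
    | trans {u v w} : UEq u v → UEq v w → UEq u w
    | comm (u v) : UEq (.inter u v) (.inter v u)
    | assoc (u v w) : UEq (.inter (.inter u v) w) (.inter u (.inter v w))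
    | omega_left (u) : UEq (.inter .omega u) u
    | inter {u u' v v'} : UEq u u' → UEq v v' → UEq (.inter u v) (.inter u' v')
    | ofTy {τ σ} : TyEq τ σ → UEq (.ofTy τ) (.ofTy σ)
end

/-- Contexts: finite lists of elements of `U`. -/
abbrev Ctx := List IU

/-- Equality of contexts in the quotient (componentwise). -/
def CtxEq (Γ Δ : Ctx) : Prop := List.Forall₂ UEq Γ Δ

/-- The extension of `∧` to contexts (with `nil` neutral). -/
def ctxAnd : Ctx → Ctx → Ctx
  | [], Δ => Δ
  | u :: Γ, [] => u :: Γ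
  | u :: Γ, v :: Δ => .inter u v :: ctxAnd Γ Δ

/-- `ω^n`: the context consisting of `n` copies of `ω`. -/
def omegas (n : ℕ) : Ctx := List.replicate n .omega

/-- `arrChain [σ1,…,σm] τ = σ1 → ⋯ → σm → τ`. -/
def arrChain (σs : List Ty) (τ : Ty) : Ty := σs.foldr (fun σ t => .arr (.ofTy σ) t) τ

/-- `interOf [σ1,…,σn] = σ1 ∧ ⋯ ∧ σn` (and `ω` for the empty list). -/
def interOf : List Ty → IU
  | [] => .omega
  | σ :: σs => σs.foldl (fun u τ => .inter u (.ofTy τ)) (.ofTy σ)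

mutual
  /-- Type variables occurring in a type. -/
  def tvT : Ty → Finset ℕ
    | .tvar a => {a}
    | .arr u τ => tvU u ∪ tvT τ
  /-- Type variables occurring in a `U`-element. -/
  def tvU : IU → Finset ℕ
    | .omega => ∅
    | .inter u v => tvU u ∪ tvU v
    | .ofTy τ => tvT τ
end

/-- Type variables occurring in a context. -/
def tvC (Γ : Ctx) : Finset ℕ := Γ.foldr (fun u s => tvU u ∪ s) ∅

mutual
  /-- Application of a type substitution to a type. -/
  def substT (s : ℕ → Ty) : Ty → Ty
    | .tvar a => s a
    | .arr u τ => .arr (substU s u) (substT s τ)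
  /-- Application of a type substitution to a `U`-element. -/
  def substU (s : ℕ → Ty) : IU → IU
    | .omega => .omega
    | .inter u v => .inter (substU s u) (substU s v)
    | .ofTy τ => .ofTy (substT s τ)
end

/-- Application of a type substitution to a context. -/
def substC (s : ℕ → Ty) (Γ : Ctx) : Ctx := Γ.map (substU s)

/-! ### The typing systems SM and SM_r

Since types are quotiented by commutativity/associativity of `∧` and
neutrality of `ω`, the systems include a conversion rule for this
equality of types/contexts. -/

/-- The typing system `SM`.  Recall that `Tm.var k` is the de Bruijn index `k+1`. -/
inductive SM : Tm → Ctx → Ty → Prop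
  | var (τ : Ty) : SM (.var 0) [.ofTy τ] τ
  | varn {k Γ τ} : SM (.var k) Γ τ → SM (.var (k + 1)) (.omega :: Γ) τ
  | arrI {M u Γ τ} : SM M (u :: Γ) τ → SM (.lam M) Γ (.arr u τ)
  | arrI' {M τ} : SM M [] τ → SM (.lam M) [] (.arr .omega τ)
  | arrE' {M1 M2 Γ Δ τ σ} : SM M1 Γ (.arr .omega τ) → SM M2 Δ σ →
      SM (.app M1 M2) (ctxAnd Γ Δ) τ
  | arrE {M1 M2 : Tm} {Γ : Ctx} {τ : Ty} (σs : List Ty) (Δs : List Ctx)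
      (hne : σs ≠ []) (hlen : Δs.length = σs.length)
      (h1 : SM M1 Γ (.arr (interOf σs) τ))
      (h2 : ∀ i, i < σs.length → SM M2 (Δs.getD i []) (σs.getD i (.tvar 0))) :
      SM (.app M1 M2) (Δs.foldl ctxAnd Γ) τ
  | conv {M Γ Γ' τ τ'} : SM M Γ τ → CtxEq Γ Γ' → TyEq τ τ' → SM M Γ' τ'

/-- The typing system `SM_r`: as `SM` but with rule (var) replaced by (var_r). -/
inductive SMr : Tm → Ctx → Ty → Prop
  | varr (σs : List Ty) (a : ℕ) :
      SMr (.var 0) [.ofTy (arrChain σs (.tvar a))] (arrChain σs (.tvar a))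
  | varn {k Γ τ} : SMr (.var k) Γ τ → SMr (.var (k + 1)) (.omega :: Γ) τ
  | arrI {M u Γ τ} : SMr M (u :: Γ) τ → SMr (.lam M) Γ (.arr u τ)
  | arrI' {M τ} : SMr M [] τ → SMr (.lam M) [] (.arr .omega τ)
  | arrE' {M1 M2 Γ Δ τ σ} : SMr M1 Γ (.arr .omega τ) → SMr M2 Δ σ →
      SMr (.app M1 M2) (ctxAnd Γ Δ) τ
  | arrE {M1 M2 : Tm} {Γ : Ctx} {τ : Ty} (σs : List Ty) (Δs : List Ctx)
      (hne : σs ≠ []) (hlen : Δs.length = σs.length)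
      (h1 : SMr M1 Γ (.arr (interOf σs) τ))
      (h2 : ∀ i, i < σs.length → SMr M2 (Δs.getD i []) (σs.getD i (.tvar 0))) :
      SMr (.app M1 M2) (Δs.foldl ctxAnd Γ) τ
  | conv {M Γ Γ' τ τ'} : SMr M Γ τ → CtxEq Γ Γ' → TyEq τ τ' → SMr M Γ' τ'

/-- The type variables of a typing (pair context/type). -/
def tvP (Γ : Ctx) (τ : Ty) : Finset ℕ := tvC Γ ∪ tvT τ

/-- The type-inference algorithm `Infer` for β-normal forms, as a relation
(the algorithm is nondeterministic in the choice of the fresh type variables;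
freshness is expressed by the disjointness side conditions). -/
inductive InferR : Tm → Ctx → Ty → Prop
  | var (k a : ℕ) : InferR (.var k) (omegas k ++ [.ofTy (.tvar a)]) (.tvar a)
  | lamCons {N : Tm} {u : IU} {Γ : Ctx} {σ : Ty} :
      InferR N (u :: Γ) σ → InferR (.lam N) Γ (.arr u σ)
  | lamNil {N : Tm} {σ : Ty} :
      InferR N [] σ → InferR (.lam N) [] (.arr .omega σ)
  | app (k : ℕ) (Ns : List Tm) (Γs : List Ctx) (σs : List Ty) (a : ℕ)
      (hne : Ns ≠ [])
      (hlen1 : Γs.length = Ns.length) (hlen2 : σs.length = Ns.length)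
      (h : ∀ i, i < Ns.length →
        InferR (Ns.getD i (.var 0)) (Γs.getD i []) (σs.getD i (.tvar 0)))
      (hdisj : ∀ i j, i < Ns.length → j < Ns.length → i ≠ j →
        Disjoint (tvP (Γs.getD i []) (σs.getD i (.tvar 0)))
                 (tvP (Γs.getD j []) (σs.getD j (.tvar 0))))
      (ha : ∀ i, i < Ns.length → a ∉ tvP (Γs.getD i []) (σs.getD i (.tvar 0))) :
      InferR (appList (.var k) Ns)
        (Γs.foldl ctxAnd (omegas k ++ [.ofTy (arrChain σs (.tvar a))]))
        (.tvar a)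

/-! ### The subsets T_C, T_NF, U_C and C-types -/

mutual
  /-- `ρ ∈ T_C ::= α | φ→ρ` with `φ ∈ T_NF`. -/
  inductive IsTC : Ty → Prop
    | tvar (a : ℕ) : IsTC (.tvar a)
    | arr {φ ρ} : IsTNF φ → IsTC ρ → IsTC (.arr (.ofTy φ) ρ)
  /-- `φ ∈ T_NF ::= α | v→φ` with `v ∈ U_C`. -/
  inductive IsTNF : Ty → Prop
    | tvar (a : ℕ) : IsTNF (.tvar a)
    | arr {v φ} : IsUC v → IsTNF φ → IsTNF (.arr v φ)
  /-- `v ∈ U_C ::= ω | v∧v | ρ` with `ρ ∈ T_C`. -/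
  inductive IsUC : IU → Prop
    | omega : IsUC .omega
    | inter {u v} : IsUC u → IsUC v → IsUC (.inter u v)
    | ofTy {ρ} : IsTC ρ → IsUC (.ofTy ρ)
end

/-- `Γ ∈ C`: all elements of `Γ` lie in `U_C`. -/
def IsCCtx (Γ : Ctx) : Prop := ∀ u ∈ Γ, IsUC u

/-- C-types: `tj Γ φ` is `Γ ⊢ φ` and `cj Δ` is `Δ ⊢`. -/
inductive CTy : Type
  | tj : Ctx → Ty → CTy
  | cj : Ctx → CTy

mutual
  /-- Number of positive occurrences of the variable `a` in a type. -/
  def posT : Ty → ℕ → ℕ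
    | .tvar b, a => if b = a then 1 else 0
    | .arr u τ, a => negU u a + posT τ a
  /-- Number of negative occurrences of the variable `a` in a type. -/
  def negT : Ty → ℕ → ℕ
    | .tvar _, _ => 0
    | .arr u τ, a => posU u a + negT τ a
  /-- Number of positive occurrences of the variable `a` in a `U`-element. -/
  def posU : IU → ℕ → ℕ
    | .omega, _ => 0
    | .inter u v, a => posU u a + posU v a
    | .ofTy τ, a => posT τ a
  /-- Number of negative occurrences of the variable `a` in a `U`-element. -/
  def negU : IU → ℕ → ℕ
    | .omega, _ => 0
    | .inter u v, a => negU u a + negU v a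
    | .ofTy τ, a => negT τ a
end

/-- Positive occurrences in a context. -/
def posC (Γ : Ctx) (a : ℕ) : ℕ := (Γ.map (fun u => posU u a)).sum
/-- Negative occurrences in a context. -/
def negC (Γ : Ctx) (a : ℕ) : ℕ := (Γ.map (fun u => negU u a)).sum

/-- Positive occurrences of a variable in a C-type (polarity is flipped in the
context part). -/
def posCT : CTy → ℕ → ℕ
  | .tj Γ φ, a => negC Γ a + posT φ a
  | .cj Γ, a => negC Γ a

/-- Negative occurrences of a variable in a C-type. -/
def negCT : CTy → ℕ → ℕ
  | .tj Γ φ, a => posC Γ a + negT φ a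
  | .cj Γ, a => posC Γ a

/-- Type variables of a C-type. -/
def tvCT : CTy → Finset ℕ
  | .tj Γ φ => tvC Γ ∪ tvT φ
  | .cj Γ => tvC Γ

/-- A C-type is closed when each of its type variables has exactly one positive
and exactly one negative occurrence. -/
def IsClosed (T : CTy) : Prop := ∀ a ∈ tvCT T, posCT T a = 1 ∧ negCT T a = 1

/-- The final (rightmost) type-variable occurrence of a type. -/
def finalT : Ty → ℕ
  | .tvar a => a
  | .arr _ φ => finalT φ

/-- The final (rightmost) type-variable occurrence of a `U`-element, if any. -/
def finalU : IU → Option ℕ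
  | .omega => none
  | .inter u v => (finalU v).orElse (fun _ => finalU u)
  | .ofTy τ => some (finalT τ)

/-- Left subtypes of a type. -/
def Lty : Ty → Set IU
  | .tvar _ => ∅
  | .arr .omega φ => Lty φ
  | .arr v φ => insert v (Lty φ)

/-- Left subtypes of a context. -/
def Lctx : Ctx → Set IU
  | [] => ∅
  | .omega :: Γ => Lctx Γ
  | v :: Γ => insert v (Lctx Γ)

/-- The set `L(T)` of left subtypes of a C-type. -/
def LCT : CTy → Set IU
  | .tj Γ φ => Lctx Γ ∪ Lty φ
  | .cj Γ => Lctx Γ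

/-- A C-type `Γ ⊢ φ` is finally closed when the final occurrence of `φ` is
also the final occurrence of some type in `L(T)`. -/
def IsFC : CTy → Prop
  | .tj Γ φ => ∃ v ∈ LCT (.tj Γ φ), finalU v = some (finalT φ)
  | .cj _ => False

/-- Equality of C-types in the quotient. -/
def CTyEq : CTy → CTy → Prop
  | .tj Γ φ, .tj Δ ψ => CtxEq Γ Δ ∧ TyEq φ ψ
  | .cj Γ, .cj Δ => CtxEq Γ Δ
  | _, _ => False

/-- `Γ` contains an element which is not (equal to) `ω`, i.e. `Γ` is not of the
form `ω^n` with `n ≥ 1` (nor `nil`). -/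
def hasNonOmega (Γ : Ctx) : Prop := ∃ u ∈ Γ, ¬ UEq u .omega

/-- `Held T' T`: the C-type `T'` is held in `T = Γ ⊢ φ`, i.e. `T' = Γ' ⊢` or
`T' = Γ' ⊢ φ` with `Γ = Γ' ∧ Δ` for some context `Δ`, where `Γ'` is not of the
form `ω^n` (`Γ'` may be `nil` in the second case). -/
inductive Held : CTy → CTy → Prop
  | cj {Γ' Δ Γ : Ctx} {φ : Ty} (hC : IsCCtx Γ') (hne : Γ' ≠ [])
      (hω : hasNonOmega Γ') (h : CtxEq Γ (ctxAnd Γ' Δ)) :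
      Held (.cj Γ') (.tj Γ φ)
  | tj {Γ' Δ Γ : Ctx} {φ : Ty} (hC : IsCCtx Γ')
      (hω : Γ' = [] ∨ hasNonOmega Γ') (h : CtxEq Γ (ctxAnd Γ' Δ)) :
      Held (.tj Γ' φ) (.tj Γ φ)

/-- `T'` is strictly held in `T`. -/
def StrictlyHeld (T' T : CTy) : Prop := Held T' T ∧ ¬ CTyEq T' T

/-- A C-type is minimally closed when no closed C-type is strictly held in it. -/
def IsMC (T : CTy) : Prop := ¬ ∃ T', StrictlyHeld T' T ∧ IsClosed T'

/-- A C-type is complete when it is closed, finally closed and minimally closed. -/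
def IsComplete (T : CTy) : Prop := IsClosed T ∧ IsFC T ∧ IsMC T

/-- Principal C-types (Definition of principal). -/
inductive Principal : CTy → Prop
  | var (k a : ℕ)
      (hcomp : IsComplete (.tj (omegas k ++ [.ofTy (.tvar a)]) (.tvar a))) :
      Principal (.tj (omegas k ++ [.ofTy (.tvar a)]) (.tvar a))
  | lamNil {φ : Ty} (hcomp : IsComplete (.tj [] (.arr .omega φ)))
      (hp : Principal (.tj [] φ)) :
      Principal (.tj [] (.arr .omega φ))
  | lam {Γ : Ctx} {v : IU} {φ : Ty} (hcomp : IsComplete (.tj Γ (.arr v φ)))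
      (hcond : Γ ≠ [] ∨ ¬ UEq v .omega)
      (hp : Principal (.tj (v :: Γ) φ)) :
      Principal (.tj Γ (.arr v φ))
  | app {Γ : Ctx} {a : ℕ} (k : ℕ) (Γs : List Ctx) (φs : List Ty)
      (hcomp : IsComplete (.tj Γ (.tvar a)))
      (hne : φs ≠ []) (hlen : Γs.length = φs.length)
      (hC : ∀ Δ ∈ Γs, IsCCtx Δ)
      (hΓ : CtxEq Γ (Γs.foldl ctxAnd (omegas k ++ [.ofTy (arrChain φs (.tvar a))])))
      (hp : ∀ i, i < φs.length →
        Principal (.tj (Γs.getD i []) (φs.getD i (.tvar 0)))) :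
      Principal (.tj Γ (.tvar a))

/-- `FO(α, Γ)`: the set of pairs `(i, Γ_i)` (1-indexed) such that `α` is the
final occurrence of `Γ_i`. -/
def FO (a : ℕ) (Γ : Ctx) : Set (ℕ × IU) :=
  {p | 1 ≤ p.1 ∧ p.1 ≤ Γ.length ∧ p.2 = Γ.getD (p.1 - 1) .omega ∧
       finalU p.2 = some a}


section Aux

/-- Size of a `U`-element: number of `ofTy` leaves. -/
def sizeU : IU → ℕ
  | .omega => 0
  | .inter u v => sizeU u + sizeU v
  | .ofTy _ => 1

lemma ueq_size {u v : IU} (h : UEq u v) : sizeU u = sizeU v := by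
  refine UEq.rec (motive_1 := fun _ _ _ => True) (motive_2 := fun u v _ => sizeU u = sizeU v)
    ?_ ?_ ?_ ?_ ?_ ?_ ?_ ?_ ?_ ?_ ?_ ?_ h <;> intros <;> simp_all [sizeU] <;> omega

lemma tyEq_shape {τ σ : Ty} (h : TyEq τ σ) :
    ((∃ a, τ = Ty.tvar a ∧ σ = Ty.tvar a) ∨
     ∃ u τ' v σ', τ = .arr u τ' ∧ σ = .arr v σ' ∧ UEq u v ∧ TyEq τ' σ') := by
  refine TyEq.rec
    (motive_1 := fun τ σ _ => ((∃ a, τ = Ty.tvar a ∧ σ = Ty.tvar a) ∨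
      ∃ u τ' v σ', τ = .arr u τ' ∧ σ = .arr v σ' ∧ UEq u v ∧ TyEq τ' σ'))
    (motive_2 := fun _ _ _ => True)
    ?_ ?_ ?_ ?_ ?_ ?_ ?_ ?_ ?_ ?_ ?_ ?_ h
  · intro τ
    cases τ with
    | tvar a => exact Or.inl ⟨a, rfl, rfl⟩
    | arr u t => exact Or.inr ⟨u, t, u, t, rfl, rfl, .refl u, .refl t⟩
  · rintro τ σ h (⟨a, rfl, rfl⟩ | ⟨u, t, v, s, rfl, rfl, h1, h2⟩)
    · exact Or.inl ⟨a, rfl, rfl⟩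
    · exact Or.inr ⟨v, s, u, t, rfl, rfl, h1.symm, h2.symm⟩
  · rintro τ σ ρ h1 h2 (⟨a, rfl, rfl⟩ | ⟨u, t, v, s, rfl, rfl, hu, ht⟩) ih2
    · rcases ih2 with ⟨b, hb, rfl⟩ | ⟨u, t, v, s, h, rfl, hu, ht⟩
      · cases hb; exact Or.inl ⟨a, rfl, rfl⟩
      · cases h
    · rcases ih2 with ⟨b, hb, rfl⟩ | ⟨u', t', v', s', h, rfl, hu', ht'⟩
      · cases hb
      · cases h; exact Or.inr ⟨u, t, v', s', rfl, rfl, hu.trans hu', ht.trans ht'⟩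
  · intro u v τ σ hu ht _ _
    exact Or.inr ⟨u, τ, v, σ, rfl, rfl, hu, ht⟩
  all_goals intros; trivial

lemma ctxEq_refl (Γ : Ctx) : CtxEq Γ Γ := by
  induction Γ with
  | nil => exact List.Forall₂.nil
  | cons u Γ ih => exact List.Forall₂.cons (UEq.refl u) ih

lemma ctxEq_symm {Γ Δ : Ctx} (h : CtxEq Γ Δ) : CtxEq Δ Γ := by
  induction h with
  | nil => exact List.Forall₂.nil
  | cons h _ ih => exact List.Forall₂.cons h.symm ih

lemma ctxEq_trans {Γ Δ Θ : Ctx} (h1 : CtxEq Γ Δ) (h2 : CtxEq Δ Θ) : CtxEq Γ Θ := by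
  induction h1 generalizing Θ with
  | nil => cases h2; exact List.Forall₂.nil
  | cons h _ ih =>
      cases h2 with
      | cons h' t' => exact List.Forall₂.cons (h.trans h') (ih t')

lemma ctxAnd_congr : ∀ {Γ Γ' Δ Δ' : Ctx}, CtxEq Γ Γ' → CtxEq Δ Δ' →
    CtxEq (ctxAnd Γ Δ) (ctxAnd Γ' Δ') := by
  intro Γ Γ' Δ Δ' h1
  induction h1 generalizing Δ Δ' with
  | nil => intro h2; exact h2
  | cons hu ht ih =>
      intro h2
      cases h2 with
      | nil => exact List.Forall₂.cons hu ht
      | cons hv tv => exact List.Forall₂.cons (UEq.inter hu hv) (ih tv)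

lemma ctxEq_append {Γ Γ' Δ Δ' : Ctx} (h1 : CtxEq Γ Γ') (h2 : CtxEq Δ Δ') :
    CtxEq (Γ ++ Δ) (Γ' ++ Δ') := by
  induction h1 with
  | nil => exact h2
  | cons h _ ih => exact List.Forall₂.cons h ih

lemma foldl_ctxAnd_congr (Δs : List Ctx) {Γ Γ' : Ctx} (h : CtxEq Γ Γ') :
    CtxEq (Δs.foldl ctxAnd Γ) (Δs.foldl ctxAnd Γ') := by
  induction Δs generalizing Γ Γ' with
  | nil => exact h
  | cons Δ Δs ih => exact ih (ctxAnd_congr h (ctxEq_refl Δ))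

lemma appList_eq_var {k k' : ℕ} {Ns : List Tm} (h : appList (.var k) Ns = .var k') :
    Ns = [] ∧ k = k' := by
  rcases Ns.eq_nil_or_concat with rfl | ⟨l, b, rfl⟩
  · simp only [appList, List.foldl_nil] at h
    exact ⟨rfl, by injection h⟩
  · simp only [appList, List.concat_eq_append, List.foldl_append, List.foldl_cons, List.foldl_nil] at h
    cases h

lemma appList_eq_app {k : ℕ} {Ns : List Tm} {M1 M2 : Tm}
    (h : appList (.var k) Ns = .app M1 M2) :
    ∃ Ns', Ns = Ns' ++ [M2] ∧ M1 = appList (.var k) Ns' := by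
  rcases Ns.eq_nil_or_concat with rfl | ⟨l, b, rfl⟩
  · simp only [appList, List.foldl_nil] at h; cases h
  · simp only [appList, List.concat_eq_append, List.foldl_append, List.foldl_cons, List.foldl_nil] at h
    injection h with h1 h2
    exact ⟨l, by rw [h2, List.concat_eq_append], h1.symm⟩

lemma appList_ne_lam {k : ℕ} {Ns : List Tm} {M : Tm}
    (h : appList (.var k) Ns = .lam M) : False := by
  rcases Ns.eq_nil_or_concat with rfl | ⟨l, b, rfl⟩
  · simp only [appList, List.foldl_nil] at h; cases h
  · simp only [appList, List.concat_eq_append, List.foldl_append, List.foldl_cons, List.foldl_nil] at h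
    cases h

lemma sizeU_interOf (σs : List Ty) : sizeU (interOf σs) = σs.length := by
  cases σs with
  | nil => rfl
  | cons σ σs =>
      simp only [interOf]
      induction σs generalizing σ with
      | nil => rfl
      | cons τ σs ih =>
          simp only [List.foldl_cons]
          have := ih (σ := σ)
          -- foldl over inter
          have h : ∀ (u : IU) (l : List Ty),
              sizeU (l.foldl (fun u τ => IU.inter u (.ofTy τ)) u) = sizeU u + l.length := by
            intro u l
            induction l generalizing u with
            | nil => simp
            | cons a l ih2 => simp [List.foldl_cons, ih2, sizeU]; omega
          simp [h, sizeU, List.length_cons]; omega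
  
lemma arrChain_append (σs : List Ty) (σ : Ty) (τ : Ty) :
    arrChain (σs ++ [σ]) τ = arrChain σs (.arr (.ofTy σ) τ) := by
  simp [arrChain, List.foldr_append]

/-- congruence of `arrChain` in its final type. -/
lemma arrChain_tyEq (σs : List Ty) {τ τ' : Ty} (h : TyEq τ τ') :
    TyEq (arrChain σs τ) (arrChain σs τ') := by
  induction σs with
  | nil => exact h
  | cons σ σs ih => exact TyEq.arr (UEq.refl _) ih

theorem smr_gen_app_aux {M : Tm} {Γ : Ctx} {τ : Ty} (h : SMr M Γ τ) :
    ∀ k Ns, M = appList (.var k) Ns →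
    ∃ (σs : List Ty) (Γs : List Ctx),
      σs.length = Ns.length ∧ Γs.length = Ns.length ∧
      CtxEq Γ (Γs.foldl ctxAnd (omegas k ++ [.ofTy (arrChain σs τ)])) ∧
      (∀ i, i < Ns.length →
        SMr (Ns.getD i (.var 0)) (Γs.getD i []) (σs.getD i (.tvar 0))) ∧
      ∃ (σs' : List Ty) (a : ℕ), TyEq τ (arrChain σs' (.tvar a)) := by
  induction h with
  | varr σs a =>
      intro k Ns hM
      obtain ⟨rfl, rfl⟩ := appList_eq_var hM.symm
      refine ⟨[], [], rfl, rfl, ?_, by simp, σs, a, TyEq.refl _⟩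
      simpa [omegas, arrChain] using ctxEq_refl _
  | varn h ih =>
      intro k Ns hM
      obtain ⟨rfl, hk⟩ := appList_eq_var hM.symm
      subst hk
      obtain ⟨σs, Γs, h1, h2, h3, h4, h5⟩ := ih _ [] rfl
      obtain rfl : σs = [] := List.length_eq_zero_iff.mp h1
      obtain rfl : Γs = [] := List.length_eq_zero_iff.mp h2
      refine ⟨[], [], rfl, rfl, ?_, by simp, h5⟩
      simp only [List.foldl_nil, omegas, List.replicate_succ, List.cons_append] at h3 ⊢
      exact List.Forall₂.cons (UEq.refl _) h3
  | arrI _ _ => intro k Ns hM; exact absurd hM.symm (fun h => appList_ne_lam h)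
  | arrI' _ _ => intro k Ns hM; exact absurd hM.symm (fun h => appList_ne_lam h)
  | arrE' h1 h2 ih1 ih2 =>
      intro k Ns hM
      obtain ⟨Ns', rfl, rfl⟩ := appList_eq_app hM.symm
      obtain ⟨σs, Γs, g1, g2, g3, g4, σs', a, g5⟩ := ih1 k Ns' rfl
      -- TyEq (.arr .omega τ) (arrChain σs' (.tvar a)) is impossible
      exfalso
      rcases tyEq_shape g5 with ⟨b, hb, _⟩ | ⟨u, t, v, s, hu, hv, huv, _⟩
      · cases hb
      · cases hu
        cases σs' with
        | nil => cases hv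
        | cons σ1 rest =>
            simp only [arrChain, List.foldr_cons] at hv
            cases hv
            have := ueq_size huv
            simp [sizeU] at this
  | arrE σs0 Δs hne hlen h1 h2 ih1 ih2 =>
      intro k Ns hM
      obtain ⟨Ns', rfl, rfl⟩ := appList_eq_app hM.symm
      obtain ⟨σs, Γs, g1, g2, g3, g4, σs', a, g5⟩ := ih1 k Ns' rfl
      rcases tyEq_shape g5 with ⟨b, hb, _⟩ | ⟨u, t, v, s, hu, hv, huv, hts⟩
      · cases hb
      · cases hu
        cases σs' with
        | nil => cases hv
        | cons σ1 rest =>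
            simp only [arrChain, List.foldr_cons] at hv
            cases hv
            -- sizeU (interOf σs0) = 1, so σs0 = [σ]
            have hsz : σs0.length = 1 := by
              have := ueq_size huv
              rw [sizeU_interOf] at this
              simpa [sizeU] using this
            obtain ⟨σ, rfl⟩ := List.length_eq_one_iff.mp hsz
            obtain ⟨Δ, rfl⟩ := List.length_eq_one_iff.mp (hlen.trans hsz)
            have hM2 := h2 0 (by simp)
            refine ⟨σs ++ [σ], Γs ++ [Δ], by simp [g1], by simp [g2], ?_, ?_, rest, a, hts⟩
            · -- context equality
              rw [arrChain_append]
              simp only [List.foldl_append, List.foldl_cons, List.foldl_nil]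
              exact ctxAnd_congr g3 (ctxEq_refl Δ)
            · intro i hi
              simp only [List.length_append, List.length_cons, List.length_nil] at hi
              rcases lt_or_eq_of_le (Nat.lt_succ_iff.mp hi) with hi' | hi'
              · rw [List.getD_append _ _ _ _ hi', List.getD_append _ _ _ _ (g2 ▸ hi'),
                  List.getD_append _ _ _ _ (g1 ▸ hi')]
                exact g4 i hi'
              · subst hi'
                rw [List.getD_append_right _ _ _ _ (le_refl _),
                  List.getD_append_right _ _ _ _ (g2.le),
                  List.getD_append_right _ _ _ _ (g1.le)]
                simpa [g1, g2] using hM2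
  | conv h hΓ hτ ih =>
      intro k Ns hM
      obtain ⟨σs, Γs, g1, g2, g3, g4, σs', a, g5⟩ := ih k Ns hM
      refine ⟨σs, Γs, g1, g2, ?_, g4, σs', a, (hτ.symm).trans g5⟩
      refine ctxEq_trans (ctxEq_symm hΓ) (ctxEq_trans g3 ?_)
      refine foldl_ctxAnd_congr Γs ?_
      exact ctxEq_append (ctxEq_refl (omegas k))
        (List.Forall₂.cons (UEq.ofTy (arrChain_tyEq σs hτ)) List.Forall₂.nil)

end Aux

/-- generation for applied variables in `SM_r`
(`Tm.var k` is the index `k+1`, so `ω^{n−1} = omegas k`). -/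
theorem smr_gen_app {k : ℕ} {Ns : List Tm} {Γ : Ctx} {τ : Ty}
    (h : SMr (appList (.var k) Ns) Γ τ) :
    ∃ (σs : List Ty) (Γs : List Ctx),
      σs.length = Ns.length ∧ Γs.length = Ns.length ∧
      CtxEq Γ (Γs.foldl ctxAnd (omegas k ++ [.ofTy (arrChain σs τ)])) ∧
      (∀ i, i < Ns.length →
        SMr (Ns.getD i (.var 0)) (Γs.getD i []) (σs.getD i (.tvar 0))) ∧
      ∃ (σs' : List Ty) (a : ℕ), TyEq τ (arrChain σs' (.tvar a)) := by
  exact smr_gen_app_aux h k Ns rfl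

end DBIT
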